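/- Entropy rate formula for trees: The entropy of the leaf distribution normalized by the expected leaf depth equals the P_B-average of the branching entropies: H(P_L)/E[w(L)] = Σ_{j∈B} P_B(j) · H(P_{S_j}). -/

import Mathlib

/-- A finite rooted tree with data of type `α` at the leaves. -/
inductive PTree (α : Type) : Type where
  | leaf (a : α) : PTree α
  | node (n : ℕ) (children : Fin n → PTree α) : PTree α

namespace PTree

/-- Node probability `Q_j`: sum of the probabilities of the leaves below the node. -/
def Q {α : Type} (pr : α → ℝ) : PTree α → ℝ
  | .leaf a => pr a
  | .node n c => ∑ k : Fin n, Q pr (c k)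

/-- All leaf probabilities are positive and every branching node has at least one
successor (so all node probabilities `Q_j` are positive). -/
def pos {α : Type} (pr : α → ℝ) : PTree α → Prop
  | .leaf a => 0 < pr a
  | .node n c => 0 < n ∧ ∀ k : Fin n, pos pr (c k)

/-- Expected value `E[f(L)]` over the leaves; nodes are identified by their
address (list of child indices from the root). -/
def leafExp {α : Type} (pr : α → ℝ) (f : List ℕ → ℝ) : PTree α → List ℕ → ℝ
  | .leaf a, addr => pr a * f addr
  | .node n c, addr => ∑ k : Fin n, leafExp pr f (c k) (addr ++ [k.val])

/-- Entropy of the leaf distribution. -/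
noncomputable def leafEntropy {α : Type} (pr : α → ℝ) : PTree α → ℝ
  | .leaf a => -(pr a * Real.logb 2 (pr a))
  | .node n c => ∑ k : Fin n, leafEntropy pr (c k)

/-- `Σ_{j∈B} P_B(j) · H(P_{S_j})` with `P_B(j) = Q_j / W`. -/
noncomputable def branchEntropyNorm {α : Type} (pr : α → ℝ) (W : ℝ) : PTree α → ℝ
  | .leaf _ => 0
  | .node n c =>
      (Q pr (.node n c) / W) *
        (-(∑ k : Fin n, (Q pr (c k) / Q pr (.node n c)) *
            Real.logb 2 (Q pr (c k) / Q pr (.node n c))))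
      + ∑ k : Fin n, branchEntropyNorm pr W (c k)

/-! The grouping property of entropy, `Q · H(q / Q) = -∑ q log q + Q log Q`, applied at every
branching node and summed by induction over the tree, gives the chain rule
`H(P_L) = ∑_{j ∈ B} Q_j · H(P_{S_j})` for a tree with `Q_root = 1`. Dividing by `E[w(L)]`
turns the weights `Q_j` into `P_B(j)`. -/

theorem _root_.Finset.mul_sum_div_mul_logb_div {ι : Type*} (s : Finset ι) (q : ι → ℝ) (b : ℝ)
    (hS : ∑ i ∈ s, q i ≠ 0) :
    (∑ i ∈ s, q i) * ∑ i ∈ s, q i / (∑ j ∈ s, q j) * Real.logb b (q i / ∑ j ∈ s, q j)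
      = ∑ i ∈ s, q i * Real.logb b (q i) - (∑ i ∈ s, q i) * Real.logb b (∑ i ∈ s, q i) := by
  set S := ∑ i ∈ s, q i
  have hterm (i : ι) : S * (q i / S * Real.logb b (q i / S))
      = q i * Real.logb b (q i) - q i * Real.logb b S := by
    rcases eq_or_ne (q i) 0 with hqi | hqi
    · simp [hqi]
    · rw [Real.logb_div hqi hS]
      field_simp
  rw [Finset.mul_sum, Finset.sum_congr rfl fun i _ => hterm i, Finset.sum_sub_distrib,
    ← Finset.sum_mul]

lemma Q_pos {α : Type} {pr : α → ℝ} {t : PTree α} (h : pos pr t) : 0 < Q pr t := by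
  induction t with
  | leaf a => exact h
  | node n c ih =>
    obtain ⟨hn, hc⟩ := h
    exact Finset.sum_pos (fun k _ => ih k (hc k)) ⟨⟨0, hn⟩, Finset.mem_univ _⟩

lemma branchEntropyNorm_eq_div {α : Type} (pr : α → ℝ) (W : ℝ) (t : PTree α) :
    branchEntropyNorm pr W t = branchEntropyNorm pr 1 t / W := by
  induction t with
  | leaf a => simp [branchEntropyNorm]
  | node n c ih =>
    simp only [branchEntropyNorm, ih, ← Finset.sum_div, add_div]
    ring

lemma leafEntropy_eq_branchEntropyNorm_one_sub {α : Type} {pr : α → ℝ} {t : PTree α}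
    (h : pos pr t) :
    leafEntropy pr t = branchEntropyNorm pr 1 t - Q pr t * Real.logb 2 (Q pr t) := by
  induction t with
  | leaf a => simp [leafEntropy, branchEntropyNorm, Q]
  | node n c ih =>
    obtain ⟨hn, hc⟩ := h
    have hgroup := Finset.univ.mul_sum_div_mul_logb_div (fun k => Q pr (c k)) 2
      (Q_pos (t := .node n c) ⟨hn, hc⟩).ne'
    simp only [leafEntropy, branchEntropyNorm, Q, div_one] at hgroup ⊢
    rw [Finset.sum_congr rfl fun k _ => ih k (hc k), Finset.sum_sub_distrib, mul_neg, hgroup]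
    ring

theorem entropy_rate_lemma_general {α : Type} (pr : α → ℝ) (t : PTree α)
    (hpos : pos pr t) (hQ : Q pr t = 1) :
    leafEntropy pr t / leafExp pr (fun addr => (addr.length : ℝ)) t []
      = branchEntropyNorm pr (leafExp pr (fun addr => (addr.length : ℝ)) t []) t := by
  rw [branchEntropyNorm_eq_div, leafEntropy_eq_branchEntropyNorm_one_sub hpos, hQ,
    Real.logb_one, mul_zero, sub_zero]

/-- Entropy rate formula: `H(P_L)/E[w(L)] = Σ_{j∈B} P_B(j) · H(P_{S_j})`. -/
theorem entropy_rate_lemma {α : Type} (pr : α → ℝ) (t : PTree α)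
    (hpos : pos pr t) (hQ : Q pr t = 1)
    (hW : 0 < leafExp pr (fun addr => (addr.length : ℝ)) t []) :
    leafEntropy pr t / leafExp pr (fun addr => (addr.length : ℝ)) t []
      = branchEntropyNorm pr (leafExp pr (fun addr => (addr.length : ℝ)) t []) t :=
  entropy_rate_lemma_general pr t hpos hQ

end PTree
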